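/- arXiv:1811.08372 — 4 statements merged into one kernel-verified Lean document; each statement's English description precedes it below -/
import Mathlib

section
/- Let H be a directed acyclic hypergraph on a finite vertex set V with chain components {τ : τ ∈ D}. Let G be the directed graph whose vertex set is D and which has an edge τ_i → τ_j exactly when τ_i ≠ τ_j and there exists a hyperedge h of H with T(h) ∩ τ_i ≠ ∅ and H(h) ∩ τ_j ≠ ∅. Then G is a directed acyclic graph: no hyperedge of H has both its tail and its head meeting the same chain component (so G has no self-loops), and G contains no directed cycle. -/
namespace BH

variable {V : Type*}

/-- The edge set of a directed hypergraph on vertex set `V`: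
each hyperedge is an ordered pair `(tail, head)` of subsets of `V`. -/
abbrev HEdges (V : Type*) := Set (Set V × Set V)

/-- Every hyperedge has disjoint tail and head. -/
def HDisjoint (E : HEdges V) : Prop := ∀ h ∈ E, Disjoint h.1 h.2

/-- `u` is a parent of `v` in the directed hypergraph. -/
def hPar (E : HEdges V) (u v : V) : Prop := ∃ h ∈ E, u ∈ h.1 ∧ v ∈ h.2

/-- `u` and `v` are neighbors (co-head) in the directed hypergraph. -/
def hNbr (E : HEdges V) (u v : V) : Prop := ∃ h ∈ E, u ∈ h.2 ∧ v ∈ h.2 ∧ u ≠ v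

/-- A partially directed cycle with respect to a neighbor relation `nbr` and a
parent relation `par`: a cyclic sequence `v_1, …, v_k, v_{k+1} = v_1` in which every
step is a neighbor-or-parent step and at least one step is a parent step. -/
def PDCycle (nbr par : V → V → Prop) : Prop :=
  ∃ (n : ℕ) (f : ZMod (n + 1) → V),
    (∀ i, nbr (f i) (f (i + 1)) ∨ par (f i) (f (i + 1))) ∧
    (∃ i, par (f i) (f (i + 1)))

/-- A directed hypergraph is acyclic if it has no partially directed cycle. -/
def HAcyclic (E : HEdges V) : Prop := ¬ PDCycle (hNbr E) (hPar E)

/-- Graph notions: a graph on `V` is a set of ordered pairs.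
`u` is a parent of `v` if `(u,v)` is a directed edge. -/
def gPar (E : Set (V × V)) (u v : V) : Prop := (u, v) ∈ E ∧ (v, u) ∉ E

/-- `u` and `v` are neighbors if `(u,v)` is an undirected edge. -/
def gNbr (E : Set (V × V)) (u v : V) : Prop := (u, v) ∈ E ∧ (v, u) ∈ E

/-- A chain graph is a graph with no partially directed cycle. -/
def IsChainGraph (E : Set (V × V)) : Prop := ¬ PDCycle (gNbr E) (gPar E)

/-- The shadow of a directed hypergraph: for every hyperedge `(X,Y)`, any two
distinct vertices of `Y` are joined by an undirected edge and there is a directed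
edge from every vertex of `X` to every vertex of `Y`. -/
def shadow (E : HEdges V) : Set (V × V) :=
  {p | ∃ h ∈ E, (p.1 ∈ h.2 ∧ p.2 ∈ h.2 ∧ p.1 ≠ p.2) ∨ (p.1 ∈ h.1 ∧ p.2 ∈ h.2)}

/-- Chain component of `v` in a directed hypergraph: reflexive-transitive closure
of the co-head relation. -/
def hComp (E : HEdges V) (v : V) : Set V := {u | Relation.ReflTransGen (hNbr E) v u}

/-- The set of chain components of a directed hypergraph. -/
def hComps (E : HEdges V) : Set (Set V) := {S | ∃ v, S = hComp E v}

/-- Chain component of `v` in a graph: vertices joined to `v` by undirected paths. -/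
def gComp (E : Set (V × V)) (v : V) : Set V := {u | Relation.ReflTransGen (gNbr E) v u}

/-- The set of chain components of a graph. -/
def gComps (E : Set (V × V)) : Set (Set V) := {S | ∃ v, S = gComp E v}

/-- Parent set of a vertex in a hypergraph. -/
def hPaSet (E : HEdges V) (v : V) : Set V := {u | hPar E u v}

/-- Neighbor set of a vertex in a hypergraph. -/
def hNbSet (E : HEdges V) (v : V) : Set V := {u | hNbr E u v}

/-- Parent set of a vertex in a graph. -/
def gPaSet (E : Set (V × V)) (v : V) : Set V := {u | gPar E u v}

/-- Neighbor set of a vertex in a graph. -/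
def gNbSet (E : Set (V × V)) (v : V) : Set V := {u | gNbr E u v}

/-- `pa(τ)` for a vertex set `τ` in a graph. -/
def gPaTau (E : Set (V × V)) (τ : Set V) : Set V := (⋃ v ∈ τ, gPaSet E v) \ τ

/-- `bd(τ)` for a vertex set `τ` in a graph. -/
def gBd (E : Set (V × V)) (τ : Set V) : Set V := (⋃ v ∈ τ, gPaSet E v ∪ gNbSet E v) \ τ

/-- `cl(τ) = bd(τ) ∪ τ`. -/
def gCl (E : Set (V × V)) (τ : Set V) : Set V := gBd E τ ∪ τ

/-- `pa(τ)` for a vertex set `τ` in a hypergraph. -/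
def hPaTau (E : HEdges V) (τ : Set V) : Set V := (⋃ v ∈ τ, hPaSet E v) \ τ

/-- Induced subgraph on a vertex set. -/
def gInduced (E : Set (V × V)) (A : Set V) : Set (V × V) := {p ∈ E | p.1 ∈ A ∧ p.2 ∈ A}

/-- Induced sub-hypergraph on a vertex set. -/
def hInduced (E : HEdges V) (A : Set V) : HEdges V := {h ∈ E | h.1 ∪ h.2 ⊆ A}

/-- Anterior set of `S` with respect to neighbor/parent relations: all vertices with
a neighbor-or-parent-step path to some vertex of `S` (including `S` itself). -/
def antOf (nbr par : V → V → Prop) (S : Set V) : Set V :=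
  {w | ∃ s ∈ S, Relation.ReflTransGen (fun a b => nbr a b ∨ par a b) w s}

/-- Anterior set in a graph. -/
def gAnt (E : Set (V × V)) (S : Set V) : Set V := antOf (gNbr E) (gPar E) S

/-- Anterior set in a hypergraph. -/
def hAnt (E : HEdges V) (S : Set V) : Set V := antOf (hNbr E) (hPar E) S

/-- The moral graph of a graph: its underlying undirected graph with all pairs of
distinct vertices inside `bd(τ)` joined, for every chain component `τ`. -/
def moral (E : Set (V × V)) : Set (V × V) :=
  {p | (p.1, p.2) ∈ E ∨ (p.2, p.1) ∈ E ∨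
    ∃ τ ∈ gComps E, p.1 ∈ gBd E τ ∧ p.2 ∈ gBd E τ ∧ p.1 ≠ p.2}

/-- `K` is a clique with respect to the (symmetric) pair set `U`. -/
def IsCliqueIn (U : Set (V × V)) (K : Set V) : Prop :=
  ∀ u ∈ K, ∀ v ∈ K, u ≠ v → (u, v) ∈ U

/-- `K` is a maximal clique of `U` inside the vertex set `S`. -/
def IsMaxCliqueWithin (U : Set (V × V)) (S K : Set V) : Prop :=
  K.Nonempty ∧ K ⊆ S ∧ IsCliqueIn U K ∧
    ∀ K', K ⊆ K' → K' ⊆ S → IsCliqueIn U K' → K' = K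

/-- The maximal cliques of the pair set `U`. -/
def maxCliques (U : Set (V × V)) : Set (Set V) :=
  {K | IsMaxCliqueWithin U Set.univ K}

/-- The undirected part of a graph, as a set of pairs. -/
def uPart (E : Set (V × V)) : Set (V × V) := {p | gNbr E p.1 p.2}

/-- The set of children of a vertex in a graph. -/
def children (E : Set (V × V)) (v : V) : Set V := {w | gPar E v w}

/-- Phase I, first stage of the canonical LWF DAH construction: for each vertex `v`
with children set `S_v`, the hyperedge `({v}, K)` for every maximal clique `K` of the
undirected part of `G[S_v]`. -/
def phase1a (E : Set (V × V)) : HEdges V :=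
  {h | ∃ v K, IsMaxCliqueWithin (uPart E) (children E v) K ∧ h = ({v}, K)}

/-- Phase I of the canonical LWF DAH construction. -/
def phase1 (E : Set (V × V)) : HEdges V :=
  phase1a E ∪
    {h | ∃ K, IsMaxCliqueWithin (uPart E) Set.univ K ∧
      (∀ h' ∈ phase1a E, ¬ K ⊆ h'.2) ∧ h = (∅, K)}

/-- The Phase-I hyperedges lying inside `cl(τ)` whose head meets `τ`. -/
def HstarI (E : Set (V × V)) (τ : Set V) : HEdges V :=
  {h ∈ phase1 E | h.1 ∪ h.2 ⊆ gCl E τ ∧ (h.2 ∩ τ).Nonempty}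

/-- The canonical LWF DAH of a chain graph (its set of hyperedges): for every chain
component `τ` and every nonempty family `F ⊆ H*_τ` with `B = ⋂_{h ∈ F} H(h)`, the
hyperedge `(⋃ {T(h) : h ∈ H*_τ, B ⊆ H(h)}, B)`. -/
def canonicalLWF (E : Set (V × V)) : HEdges V :=
  {e | ∃ τ ∈ gComps E, ∃ F, F ⊆ HstarI E τ ∧ F.Nonempty ∧
    e.2 = {x | ∀ g ∈ F, x ∈ g.2} ∧
    e.1 = {x | ∃ h ∈ HstarI E τ, e.2 ⊆ h.2 ∧ x ∈ h.1}}

/-- The hyperedges of `H[τ ∪ pa(τ)]` whose head is contained in `τ`. -/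
def HstarF (E : HEdges V) (τ : Set V) : HEdges V :=
  {h ∈ hInduced E (τ ∪ hPaTau E τ) | h.2 ⊆ τ}

/-- The hyperedges of a family whose underlying vertex sets are maximal under
set containment. -/
def maximalIn (E : HEdges V) : HEdges V :=
  {h ∈ E | ∀ h' ∈ E, h.1 ∪ h.2 ⊆ h'.1 ∪ h'.2 → h'.1 ∪ h'.2 = h.1 ∪ h.2}

/-- Descendants of `v` with respect to a parent relation. -/
def desc (par : V → V → Prop) (v : V) : Set V := {u | Relation.TransGen par v u}

/-- Non-descendants of `v`. -/
def ndOf (par : V → V → Prop) (v : V) : Set V := {u | u ∉ desc par v}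

/-- Adjacency with respect to neighbor/parent relations. -/
def adjOf (nbr par : V → V → Prop) (u v : V) : Prop := par u v ∨ par v u ∨ nbr u v

/-- Boundary of a vertex. -/
def bdOf (nbr par : V → V → Prop) (v : V) : Set V := {u | par u v} ∪ {u | nbr u v}

/-- Closure of a vertex. -/
def clOf (nbr par : V → V → Prop) (v : V) : Set V := bdOf nbr par v ∪ {v}

/-- `C` separates `A` and `B` in the undirected graph with pair set `U`:
every path from `A` to `B` meets `C`. -/
def Separates (U : Set (V × V)) (A B C : Set V) : Prop :=
  ∀ (n : ℕ) (f : Fin (n + 1) → V), f 0 ∈ A → f (Fin.last n) ∈ B →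
    (∀ i : Fin n, (f i.castSucc, f i.succ) ∈ U) → ∃ i, f i ∈ C

section Prob

variable [Fintype V] [DecidableEq V] {X : V → Type*} [∀ v, Fintype (X v)]

/-- `p` is a probability mass function. -/
def IsPMF (p : (∀ v, X v) → ℝ) : Prop := (∀ x, 0 ≤ p x) ∧ ∑ x, p x = 1

/-- Marginal of `p` on the coordinates in `S`, evaluated at `x`. -/
noncomputable def marginal (p : (∀ v, X v) → ℝ) (S : Set V) (x : ∀ v, X v) : ℝ :=
  ∑ y, Set.indicator {z : ∀ v, X v | ∀ v ∈ S, z v = x v} p y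

/-- Conditional independence `A ⟂ B | C` for the pmf `p`. -/
def CI (p : (∀ v, X v) → ℝ) (A B C : Set V) : Prop :=
  ∀ x, marginal p (A ∪ B ∪ C) x * marginal p C x
      = marginal p (A ∪ C) x * marginal p (B ∪ C) x

/-- The intersection property (S5). -/
def S5 (p : (∀ v, X v) → ℝ) : Prop :=
  ∀ A B C D : Set V, Disjoint A B → Disjoint A C → Disjoint A D →
    Disjoint B C → Disjoint B D → Disjoint C D →
    CI p A B (D ∪ C) → CI p A D (B ∪ C) → CI p A (B ∪ D) C

/-- Pairwise Markov property with respect to neighbor/parent relations. -/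
def PairwiseMarkov (nbr par : V → V → Prop) (p : (∀ v, X v) → ℝ) : Prop :=
  ∀ v u, v ≠ u → ¬ adjOf nbr par v u → u ∈ ndOf par v →
    CI p {v} {u} (ndOf par v \ {v, u})

/-- Local Markov property with respect to neighbor/parent relations. -/
def LocalMarkov (nbr par : V → V → Prop) (p : (∀ v, X v) → ℝ) : Prop :=
  ∀ v, CI p {v} (ndOf par v \ clOf nbr par v) (bdOf nbr par v)

/-- Global Markov property relative to a chain graph. -/
def GlobalMarkovG (E : Set (V × V)) (p : (∀ v, X v) → ℝ) : Prop :=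
  ∀ A B C : Set V, Disjoint A B → Disjoint A C → Disjoint B C →
    Separates (moral (gInduced E (gAnt E (A ∪ B ∪ C)))) A B C → CI p A B C

/-- Global Markov property relative to a directed hypergraph. -/
def GlobalMarkovH (E : HEdges V) (p : (∀ v, X v) → ℝ) : Prop :=
  ∀ A B C : Set V, Disjoint A B → Disjoint A C → Disjoint B C →
    Separates (moral (shadow (hInduced E (hAnt E (A ∪ B ∪ C))))) A B C → CI p A B C

/-- `f` depends only on the coordinates in `S`. -/
def DependsOn (f : (∀ v, X v) → ℝ) (S : Set V) : Prop :=
  ∀ x y, (∀ v ∈ S, x v = y v) → f x = f y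

/-- Conditional pmf `p(x_S | x_T)` as a ratio of marginals. -/
noncomputable def condM (p : (∀ v, X v) → ℝ) (S T : Set V) (x : ∀ v, X v) : ℝ :=
  marginal p (S ∪ T) x / marginal p T x

/-- Sum of `F` over the coordinates in `τ`, the remaining coordinates fixed at `x`. -/
noncomputable def sumOver (τ : Set V) (F : (∀ v, X v) → ℝ) (x : ∀ v, X v) : ℝ :=
  ∑ y, Set.indicator {z : ∀ v, X v | ∀ v, v ∉ τ → z v = x v} F y

/-- Factorization (CF) of a pmf according to a chain graph. -/
def FactorizesCG (E : Set (V × V)) (p : (∀ v, X v) → ℝ) : Prop :=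
  (∀ x, p x = ∏ᶠ τ ∈ gComps E, condM p τ (gPaTau E τ) x) ∧
  ∀ τ ∈ gComps E, ∃ ψ : Set V → (∀ v, X v) → ℝ,
    (∀ K ∈ maxCliques (moral (gInduced E (τ ∪ gPaTau E τ))),
      (∀ x, 0 ≤ ψ K x) ∧ DependsOn (ψ K) K) ∧
    ∀ x, condM p τ (gPaTau E τ) x
      = (∏ᶠ K ∈ maxCliques (moral (gInduced E (τ ∪ gPaTau E τ))), ψ K x) /
        sumOver τ (fun y => ∏ᶠ K ∈ maxCliques (moral (gInduced E (τ ∪ gPaTau E τ))), ψ K y) x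

/-- Factorization (HF) of a pmf according to a directed acyclic hypergraph. -/
def FactorizesBH (E : HEdges V) (p : (∀ v, X v) → ℝ) : Prop :=
  (∀ x, p x = ∏ᶠ τ ∈ hComps E, condM p τ (hPaTau E τ) x) ∧
  ∀ τ ∈ hComps E, ∃ ψ : Set V × Set V → (∀ v, X v) → ℝ,
    (∀ h ∈ maximalIn (HstarF E τ), (∀ x, 0 ≤ ψ h x) ∧ DependsOn (ψ h) (h.1 ∪ h.2)) ∧
    (∀ x, condM p τ (hPaTau E τ) x = ∏ᶠ h ∈ maximalIn (HstarF E τ), ψ h x) ∧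
    (∀ x, sumOver τ (fun y => ∏ᶠ h ∈ maximalIn (HstarF E τ), ψ h y) x = 1)

/-- Factorization of a pmf according to a chain graph with intervened set `A`. -/
def FactorizesCGInt (E : Set (V × V)) (A : Set V) (f : (∀ v, X v) → ℝ) : Prop :=
  (∀ x, f x = ∏ᶠ τ ∈ gComps E, condM f (τ \ A) (gPaTau E τ ∪ (τ ∩ A)) x) ∧
  ∀ τ ∈ gComps E, ∃ ψ : Set V → (∀ v, X v) → ℝ,
    (∀ K ∈ maxCliques (moral (gInduced E (τ ∪ gPaTau E τ))),
      (∀ x, 0 ≤ ψ K x) ∧ DependsOn (ψ K) K) ∧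
    ∀ x, condM f (τ \ A) (gPaTau E τ ∪ (τ ∩ A)) x
      = (∏ᶠ K ∈ maxCliques (moral (gInduced E (τ ∪ gPaTau E τ))), ψ K x) /
        sumOver (τ \ A)
          (fun y => ∏ᶠ K ∈ maxCliques (moral (gInduced E (τ ∪ gPaTau E τ))), ψ K y) x

/-- Factorization of a pmf according to a directed acyclic hypergraph with
intervened set `A`. -/
def FactorizesBHInt (E : HEdges V) (A : Set V) (f : (∀ v, X v) → ℝ) : Prop :=
  (∀ x, f x = ∏ᶠ τ ∈ hComps E, condM f (τ \ A) (hPaTau E τ ∪ (τ ∩ A)) x) ∧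
  ∀ τ ∈ hComps E, ∃ ψ : Set V × Set V → (∀ v, X v) → ℝ,
    (∀ h ∈ maximalIn (HstarF E τ), (∀ x, 0 ≤ ψ h x) ∧ DependsOn (ψ h) (h.1 ∪ h.2)) ∧
    ∀ x, condM f (τ \ A) (hPaTau E τ ∪ (τ ∩ A)) x
      = (∏ᶠ h ∈ maximalIn (HstarF E τ), ψ h x) /
        sumOver (τ \ A) (fun y => ∏ᶠ h ∈ maximalIn (HstarF E τ), ψ h y) x

/-- `f` is supported on configurations consistent with the intervention `x_A = a₀`. -/
def ConsistentWith (f : (∀ v, X v) → ℝ) (A : Set V) (a0 : ∀ v, X v) : Prop :=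
  ∀ x, f x ≠ 0 → ∀ v ∈ A, x v = a0 v

end Prob

end BH

/-!
A hyperedge whose tail meets a chain component `σ` and whose head meets a component `ρ`
gives a parent step from `σ` into `ρ`, and any two vertices of one component are joined
by co-head steps. So a self-loop or a directed cycle of components, read off vertex by
vertex, closes up into a partially directed cycle of the hypergraph.
-/

namespace BH

variable {V : Type*}

theorem exists_fin_path_of_reflTransGen {r : V → V → Prop} {a b : V}
    (h : Relation.ReflTransGen r a b) :
    ∃ (n : ℕ) (f : Fin (n + 1) → V), f 0 = a ∧ f (Fin.last n) = b ∧
      ∀ i : Fin n, r (f i.castSucc) (f i.succ) := by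
  induction h using Relation.ReflTransGen.head_induction_on with
  | refl => exact ⟨0, fun _ => b, rfl, rfl, Fin.elim0⟩
  | head hac _ ih =>
    obtain ⟨n, f, hf0, hfn, hf⟩ := ih
    refine ⟨n + 1, Fin.cons _ f, rfl, hfn, Fin.cases ?_ fun j => ?_⟩
    · simpa [hf0] using hac
    · simpa [← Fin.succ_castSucc] using hf j

theorem pdCycle_of_par_of_reflTransGen {nbr par : V → V → Prop} {a b : V} (hab : par a b)
    (hba : Relation.ReflTransGen (fun x y => nbr x y ∨ par x y) b a) : PDCycle nbr par := by
  obtain ⟨n, f, hf0, hfn, hf⟩ := exists_fin_path_of_reflTransGen hba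
  have hpar : par (f (Fin.last n)) (f (Fin.last n + 1)) := by
    rwa [Fin.last_add_one, hf0, hfn]
  -- `ZMod (n + 1)` is `Fin (n + 1)`, so the path `f` itself is the cycle.
  refine ⟨n, f, fun i => ?_, ⟨Fin.last n, hpar⟩⟩
  induction i using Fin.lastCases with
  | last => exact Or.inr hpar
  | cast j =>
    have hj := hf j
    rwa [← Fin.coeSucc_eq_succ] at hj

instance (E : HEdges V) : Std.Symm (hNbr E) where
  symm _ _ := fun ⟨e, he, hu, hv, huv⟩ => ⟨e, he, hv, hu, huv.symm⟩

theorem reflTransGen_hNbr_of_mem_hComps {E : HEdges V} {τ : Set V} (hτ : τ ∈ hComps E)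
    {a b : V} (ha : a ∈ τ) (hb : b ∈ τ) : Relation.ReflTransGen (hNbr E) a b := by
  obtain ⟨v, rfl⟩ := hτ
  exact (symm_of (Relation.ReflTransGen (hNbr E)) ha).trans hb

theorem mem_hComp_self (E : HEdges V) (v : V) : v ∈ hComp E v :=
  Relation.ReflTransGen.refl

/-- Loops `σ = σ` are allowed, so that a self-loop and a directed cycle of the component
graph are both cycles of this relation. -/
def hCompArrow (E : HEdges V) (σ ρ : Set V) : Prop :=
  σ ∈ hComps E ∧ ∃ h ∈ E, (h.1 ∩ σ).Nonempty ∧ (h.2 ∩ ρ).Nonempty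

theorem exists_hPar_of_transGen_hCompArrow {E : HEdges V} {σ ρ : Set V}
    (hσρ : Relation.TransGen (hCompArrow E) σ ρ) (hρ : ρ ∈ hComps E) {x y : V}
    (hx : x ∈ σ) (hy : y ∈ ρ) :
    ∃ p q, hPar E p q ∧
      Relation.ReflTransGen (fun a b => hNbr E a b ∨ hPar E a b) x p ∧
      Relation.ReflTransGen (fun a b => hNbr E a b ∨ hPar E a b) q y := by
  have step_of_mem : ∀ {τ}, τ ∈ hComps E → ∀ {a b}, a ∈ τ → b ∈ τ →
      Relation.ReflTransGen (fun a b => hNbr E a b ∨ hPar E a b) a b :=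
    fun hτ _ _ ha hb =>
      Relation.ReflTransGen.mono (fun _ _ => Or.inl) _ _ (reflTransGen_hNbr_of_mem_hComps hτ ha hb)
  induction hσρ generalizing y with
  | single harrow =>
    obtain ⟨hσ, e, he, ⟨u, hu, huσ⟩, ⟨w, hw, hwρ⟩⟩ := harrow
    exact ⟨u, w, ⟨e, he, hu, hw⟩, step_of_mem hσ hx huσ, step_of_mem hρ hwρ hy⟩
  | tail _ harrow ih =>
    obtain ⟨hμ, e, he, ⟨u, hu, huμ⟩, ⟨w, hw, hwρ⟩⟩ := harrow
    obtain ⟨p, q, hpq, hxp, hqu⟩ := ih hμ huμ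
    refine ⟨p, q, hpq, hxp, ?_⟩
    exact hqu.trans (.head (Or.inr ⟨e, he, hu, hw⟩) (step_of_mem hρ hwρ hy))

theorem not_transGen_hCompArrow_self {E : HEdges V} (hacyc : HAcyclic E) {τ : Set V}
    (hτ : τ ∈ hComps E) : ¬ Relation.TransGen (hCompArrow E) τ τ := by
  intro hcyc
  obtain ⟨v, rfl⟩ := hτ
  obtain ⟨p, q, hpq, hvp, hqv⟩ :=
    exists_hPar_of_transGen_hCompArrow hcyc ⟨v, rfl⟩ (mem_hComp_self E v) (mem_hComp_self E v)
  exact hacyc (pdCycle_of_par_of_reflTransGen hpq (hqv.trans hvp))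

end BH

theorem statement0_general {V : Type*} (E : BH.HEdges V)
    (hacyc : BH.HAcyclic E) :
    (∀ h ∈ E, ∀ τ ∈ BH.hComps E, ¬ ((h.1 ∩ τ).Nonempty ∧ (h.2 ∩ τ).Nonempty)) ∧
    (∀ τ ∈ BH.hComps E,
      ¬ Relation.TransGen
        (fun τ₁ τ₂ => τ₁ ∈ BH.hComps E ∧ τ₂ ∈ BH.hComps E ∧ τ₁ ≠ τ₂ ∧
          ∃ h ∈ E, (h.1 ∩ τ₁).Nonempty ∧ (h.2 ∩ τ₂).Nonempty) τ τ) := by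
  refine ⟨fun h hE τ hτ hmeets => ?loop, fun τ hτ hcyc => ?cycle⟩
  case loop =>
    exact BH.not_transGen_hCompArrow_self hacyc hτ (.single ⟨hτ, h, hE, hmeets⟩)
  case cycle =>
    refine BH.not_transGen_hCompArrow_self hacyc hτ (Relation.TransGen.mono ?_ _ _ hcyc)
    rintro σ ρ ⟨hσ, -, -, harrow⟩
    exact ⟨hσ, harrow⟩

/-- The canonical DAG of a directed acyclic hypergraph: no hyperedge
has both its tail and its head meeting the same chain component (so there are no
self-loops), and the directed graph on the chain components, with an edge `τ₁ → τ₂`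
exactly when `τ₁ ≠ τ₂` and some hyperedge has tail meeting `τ₁` and head meeting `τ₂`,
contains no directed cycle. -/
theorem statement0 {V : Type*} [Fintype V] (E : BH.HEdges V)
    (hdisj : BH.HDisjoint E) (hacyc : BH.HAcyclic E) :
    (∀ h ∈ E, ∀ τ ∈ BH.hComps E, ¬ ((h.1 ∩ τ).Nonempty ∧ (h.2 ∩ τ).Nonempty)) ∧
    (∀ τ ∈ BH.hComps E,
      ¬ Relation.TransGen
        (fun τ₁ τ₂ => τ₁ ∈ BH.hComps E ∧ τ₂ ∈ BH.hComps E ∧ τ₁ ≠ τ₂ ∧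
          ∃ h ∈ E, (h.1 ∩ τ₁).Nonempty ∧ (h.2 ∩ τ₂).Nonempty) τ τ) :=
  statement0_general E hacyc
end

section
/- Let H be a directed acyclic hypergraph. Then the shadow ∂(H) of H is a chain graph, i.e., ∂(H) contains no partially directed cycle. -/
/-! Every shadow edge comes from a hyperedge, as a co-head or a tail–head pair, so a partially
directed cycle of the shadow is a cycle of neighbor-or-parent steps of the hypergraph. Its directed
step is a parent step: a co-head pair is joined in both directions in the shadow, so it never
yields a directed edge. -/

namespace BH

variable {V : Type*}

theorem PDCycle.mono {nbr par nbr' par' : V → V → Prop}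
    (hstep : ∀ u v, nbr u v ∨ par u v → nbr' u v ∨ par' u v)
    (hpar : ∀ u v, par u v → par' u v) :
    PDCycle nbr par → PDCycle nbr' par' := by
  rintro ⟨n, f, hsteps, i, hi⟩
  exact ⟨n, f, fun j => hstep _ _ (hsteps j), i, hpar _ _ hi⟩

theorem hNbr_or_hPar_of_mem_shadow {E : HEdges V} {u v : V} (huv : (u, v) ∈ shadow E) :
    hNbr E u v ∨ hPar E u v := by
  obtain ⟨h, hE, ⟨hu, hv, hne⟩ | ⟨hu, hv⟩⟩ := huv
  · exact Or.inl ⟨h, hE, hu, hv, hne⟩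
  · exact Or.inr ⟨h, hE, hu, hv⟩

theorem hPar_of_gPar_shadow {E : HEdges V} {u v : V} (huv : gPar (shadow E) u v) :
    hPar E u v := by
  obtain ⟨hmem, hnot⟩ := huv
  refine (hNbr_or_hPar_of_mem_shadow hmem).resolve_left ?_
  rintro ⟨h, hE, hu, hv, hne⟩
  exact hnot ⟨h, hE, Or.inl ⟨hv, hu, hne.symm⟩⟩

end BH

theorem statement1_general {V : Type*} (E : BH.HEdges V)
    (hacyc : BH.HAcyclic E) :
    BH.IsChainGraph (BH.shadow E) := fun hcyc =>
  hacyc <| hcyc.mono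
    (fun _ _ hstep => BH.hNbr_or_hPar_of_mem_shadow (hstep.elim And.left And.left))
    (fun _ _ => BH.hPar_of_gPar_shadow)

/-- The shadow of a directed acyclic hypergraph is a chain graph. -/
theorem statement1 {V : Type*} [Fintype V] (E : BH.HEdges V)
    (hdisj : BH.HDisjoint E) (hacyc : BH.HAcyclic E) :
    BH.IsChainGraph (BH.shadow E) :=
  statement1_general E hacyc
end

section
/- Let H be a directed acyclic hypergraph and G = ∂(H) its shadow. Then for every vertex v, the set of neighbors of v in G equals the set of neighbors of v in H, and the set of parents of v in G equals the set of parents of v in H. -/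
namespace BH

variable {V : Type*}

lemma PDCycle.of_par_of_nbr_or_par {nbr par : V → V → Prop} {u v : V}
    (huv : par u v) (hvu : nbr v u ∨ par v u) : PDCycle nbr par :=
  ⟨1, ![u, v], fun i => by fin_cases i; exacts [.inr huv, hvu], 0, huv⟩

lemma hNbr.symm {E : HEdges V} {u v : V} : hNbr E u v → hNbr E v u :=
  fun ⟨h, hE, hu, hv, huv⟩ => ⟨h, hE, hv, hu, huv.symm⟩

lemma mem_shadow_iff {E : HEdges V} {u v : V} :
    (u, v) ∈ shadow E ↔ hNbr E u v ∨ hPar E u v := by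
  simp only [shadow, hNbr, hPar, Set.mem_ofPred_eq, and_or_left, exists_or]

/-- A parent step `u → v` followed by any shadow edge back to `u` is a partially directed
2-cycle. -/
lemma HAcyclic.notMem_shadow_of_hPar {E : HEdges V} (hE : HAcyclic E) {u v : V}
    (huv : hPar E u v) : (v, u) ∉ shadow E :=
  fun hvu => hE (.of_par_of_nbr_or_par huv (mem_shadow_iff.mp hvu))

lemma HAcyclic.gNbr_shadow_iff {E : HEdges V} (hE : HAcyclic E) {u v : V} :
    gNbr (shadow E) u v ↔ hNbr E u v := by
  refine ⟨fun ⟨huv, hvu⟩ => ?_, fun h => ⟨mem_shadow_iff.mpr (.inl h),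
    mem_shadow_iff.mpr (.inl h.symm)⟩⟩
  exact (mem_shadow_iff.mp huv).resolve_right fun hpar => hE.notMem_shadow_of_hPar hpar hvu

lemma HAcyclic.gPar_shadow_iff {E : HEdges V} (hE : HAcyclic E) {u v : V} :
    gPar (shadow E) u v ↔ hPar E u v := by
  refine ⟨fun ⟨huv, hvu⟩ => ?_, fun h => ⟨mem_shadow_iff.mpr (.inr h),
    hE.notMem_shadow_of_hPar h⟩⟩
  exact (mem_shadow_iff.mp huv).resolve_left fun hnbr => hvu (mem_shadow_iff.mpr (.inl hnbr.symm))

end BH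

theorem statement2_general {V : Type*} (E : BH.HEdges V)
    (hacyc : BH.HAcyclic E) :
    ∀ v : V, BH.gNbSet (BH.shadow E) v = BH.hNbSet E v ∧
      BH.gPaSet (BH.shadow E) v = BH.hPaSet E v :=
  fun _ => ⟨Set.ext fun _ => hacyc.gNbr_shadow_iff, Set.ext fun _ => hacyc.gPar_shadow_iff⟩

/-- For every vertex `v`, the neighbors of `v` in the shadow of a
directed acyclic hypergraph coincide with its neighbors in the hypergraph, and
likewise for parents. -/
theorem statement2 {V : Type*} [Fintype V] (E : BH.HEdges V)
    (hdisj : BH.HDisjoint E) (hacyc : BH.HAcyclic E) :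
    ∀ v : V, BH.gNbSet (BH.shadow E) v = BH.hNbSet E v ∧
      BH.gPaSet (BH.shadow E) v = BH.hPaSet E v :=
  statement2_general E hacyc
end

section
/- Let G be a chain graph, H its canonical LWF DAH, and p a probability mass function on ∏_{v∈V} X_v. Then p is pairwise G-Markovian if and only if p is pairwise H-Markovian. -/
/-! The pairwise Markov property only sees the parent relation and adjacency, and the canonical
LWF DAH has the same ones as `G`. Every hyperedge tail is a union of Phase-I tails `{w}` whose
heads are cliques of children of `w` containing the new head, so its parents are parents in `G`;
conversely `u → v` in `G` puts `v` in a maximal clique `K` of the children of `u`, and `({u}, K)`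
yields a hyperedge. Heads are intersections of cliques of the undirected part, so co-head
vertices are neighbours in `G`; conversely an undirected edge `u − v` extends to a maximal clique,
which is the head of a Phase-I hyperedge (of the first stage if it lies in some head there, of the
second otherwise). -/

namespace BH

variable {V : Type*}

lemma gNbr.symm {E : Set (V × V)} {u v : V} (h : gNbr E u v) : gNbr E v u := ⟨h.2, h.1⟩

lemma exists_isMaxCliqueWithin_superset [Finite V] {U : Set (V × V)} {S K₀ : Set V}
    (hne : K₀.Nonempty) (hS : K₀ ⊆ S) (hK₀ : IsCliqueIn U K₀) :
    ∃ K, K₀ ⊆ K ∧ IsMaxCliqueWithin U S K := by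
  obtain ⟨K, ⟨hK₀K, hKS, hK⟩, hmax⟩ := Set.Finite.exists_maximalFor (id : Set V → Set V)
    {K | K₀ ⊆ K ∧ K ⊆ S ∧ IsCliqueIn U K} (Set.toFinite _) ⟨K₀, subset_rfl, hS, hK₀⟩
  exact ⟨K, hK₀K, hne.mono hK₀K, hKS, hK, fun K' hKK' hK'S hK' =>
    (hmax (j := K') ⟨hK₀K.trans hKK', hK'S, hK'⟩ hKK').antisymm hKK'⟩

lemma isCliqueIn_uPart_of_mem_phase1 {E : Set (V × V)} {h : Set V × Set V}
    (hh : h ∈ phase1 E) : IsCliqueIn (uPart E) h.2 := by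
  rcases hh with ⟨v, K, hK, rfl⟩ | ⟨K, hK, -, rfl⟩ <;> exact hK.2.2.1

lemma gPar_of_mem_phase1 {E : Set (V × V)} {h : Set V × Set V} (hh : h ∈ phase1 E)
    {u v : V} (hu : u ∈ h.1) (hv : v ∈ h.2) : gPar E u v := by
  rcases hh with ⟨w, K, hK, rfl⟩ | ⟨K, -, -, rfl⟩
  · obtain rfl : u = w := hu
    exact hK.2.1 hv
  · exact absurd hu (Set.notMem_empty u)

lemma IsCliqueIn.subset_gComp {E : Set (V × V)} {K : Set V} (hK : IsCliqueIn (uPart E) K)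
    {v : V} (hv : v ∈ K) : K ⊆ gComp E v := by
  intro x hx
  rcases eq_or_ne v x with rfl | hne
  · exact Relation.ReflTransGen.refl
  · exact Relation.ReflTransGen.single (hK v hv x hx hne)

lemma mem_gCl_of_gPar {E : Set (V × V)} {τ : Set V} {u v : V} (hv : v ∈ τ)
    (huv : gPar E u v) : u ∈ gCl E τ := by
  by_cases hu : u ∈ τ
  · exact Or.inr hu
  · exact Or.inl ⟨Set.mem_biUnion hv (Or.inl huv), hu⟩

lemma mem_HstarI_gComp {E : Set (V × V)} {h : Set V × Set V} (hh : h ∈ phase1 E)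
    {v : V} (hv : v ∈ h.2) : h ∈ HstarI E (gComp E v) := by
  have hcomp : h.2 ⊆ gComp E v := (isCliqueIn_uPart_of_mem_phase1 hh).subset_gComp hv
  refine ⟨hh, ?_, v, hv, hcomp hv⟩
  rintro x (hx | hx)
  · exact mem_gCl_of_gPar Relation.ReflTransGen.refl (gPar_of_mem_phase1 hh hx hv)
  · exact Or.inr (hcomp hx)

/-- The family `F = {h}` in Phase II. -/
lemma mem_canonicalLWF_of_mem_HstarI {E : Set (V × V)} {τ : Set V} (hτ : τ ∈ gComps E)
    {h : Set V × Set V} (hh : h ∈ HstarI E τ) :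
    (({x | ∃ g ∈ HstarI E τ, h.2 ⊆ g.2 ∧ x ∈ g.1}, h.2) : Set V × Set V)
      ∈ canonicalLWF E := by
  refine ⟨τ, hτ, {h}, Set.singleton_subset_iff.mpr hh, Set.singleton_nonempty h, ?_, rfl⟩
  ext x
  simp

lemma exists_mem_phase1_snd_eq {E : Set (V × V)} {K : Set V}
    (hK : IsMaxCliqueWithin (uPart E) Set.univ K) : ∃ h ∈ phase1 E, h.2 = K := by
  by_cases hcov : ∃ h ∈ phase1a E, K ⊆ h.2
  · obtain ⟨_, ⟨w, K', hK', rfl⟩, hKK'⟩ := hcov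
    exact ⟨_, Or.inl ⟨w, K', hK', rfl⟩, hK.2.2.2 K' hKK' (Set.subset_univ _) hK'.2.2.1⟩
  · exact ⟨(∅, K), Or.inr ⟨K, hK, fun h hh hKh => hcov ⟨h, hh, hKh⟩, rfl⟩, rfl⟩

lemma hPar_canonicalLWF [Finite V] (E : Set (V × V)) : hPar (canonicalLWF E) = gPar E := by
  ext u v
  constructor
  · rintro ⟨e, ⟨τ, -, F, -, -, -, he⟩, hu, hv⟩
    rw [he] at hu
    obtain ⟨h, hh, hsub, hu⟩ := hu
    exact gPar_of_mem_phase1 hh.1 hu (hsub hv)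
  · intro huv
    obtain ⟨K, hvK, hK⟩ := exists_isMaxCliqueWithin_superset (U := uPart E) (S := children E u)
      (Set.singleton_nonempty v) (Set.singleton_subset_iff.mpr huv)
      (by rintro a rfl b rfl hab; exact absurd rfl hab)
    have hvK : v ∈ K := hvK rfl
    have hHstar := mem_HstarI_gComp (Or.inl ⟨u, K, hK, rfl⟩) hvK
    exact ⟨_, mem_canonicalLWF_of_mem_HstarI ⟨v, rfl⟩ hHstar,
      ⟨({u}, K), hHstar, subset_rfl, rfl⟩, hvK⟩

lemma hNbr_canonicalLWF_iff [Finite V] {E : Set (V × V)} {u v : V} (huv : u ≠ v) :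
    hNbr (canonicalLWF E) u v ↔ gNbr E u v := by
  constructor
  · rintro ⟨e, ⟨τ, -, F, hF, ⟨g, hgF⟩, he, -⟩, hu, hv, -⟩
    rw [he] at hu hv
    exact isCliqueIn_uPart_of_mem_phase1 (hF hgF).1 u (hu g hgF) v (hv g hgF) huv
  · intro hnbr
    obtain ⟨K, huvK, hK⟩ := exists_isMaxCliqueWithin_superset (U := uPart E) (S := Set.univ)
      (Set.insert_nonempty u {v}) (Set.subset_univ _) (by
        rintro a (rfl | rfl) b (rfl | rfl) hab
        exacts [absurd rfl hab, hnbr, hnbr.symm, absurd rfl hab])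
    obtain ⟨h, hh, rfl⟩ := exists_mem_phase1_snd_eq hK
    have hu : u ∈ h.2 := huvK (Or.inl rfl)
    exact ⟨_, mem_canonicalLWF_of_mem_HstarI ⟨u, rfl⟩ (mem_HstarI_gComp hh hu), hu,
      huvK (Or.inr rfl), huv⟩

variable [Fintype V] [DecidableEq V] {X : V → Type*} [∀ v, Fintype (X v)]

lemma pairwiseMarkov_congr_nbr {nbr nbr' par : V → V → Prop}
    (hnbr : ∀ u v, u ≠ v → (nbr u v ↔ nbr' u v)) (p : (∀ v, X v) → ℝ) :
    PairwiseMarkov nbr par p ↔ PairwiseMarkov nbr' par p := by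
  have hadj : ∀ v u, v ≠ u → (adjOf nbr par v u ↔ adjOf nbr' par v u) := fun v u hvu =>
    or_congr_right (or_congr_right (hnbr v u hvu))
  exact forall₂_congr fun v u => forall_congr' fun hvu =>
    imp_congr_left (not_congr (hadj v u hvu))

end BH

theorem statement8_general {V : Type*} [Fintype V] [DecidableEq V]
    {X : V → Type*} [∀ v, Fintype (X v)]
    (E : Set (V × V))
    (p : (∀ v, X v) → ℝ) :
    BH.PairwiseMarkov (BH.gNbr E) (BH.gPar E) p ↔
      BH.PairwiseMarkov (BH.hNbr (BH.canonicalLWF E)) (BH.hPar (BH.canonicalLWF E)) p := by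
  rw [BH.hPar_canonicalLWF]
  exact BH.pairwiseMarkov_congr_nbr (fun _ _ huv => (BH.hNbr_canonicalLWF_iff huv).symm) p

/-- A pmf is pairwise Markovian relative to a chain graph if and only
if it is pairwise Markovian relative to the canonical LWF DAH of the chain graph. -/
theorem statement8 {V : Type*} [Fintype V] [DecidableEq V]
    {X : V → Type*} [∀ v, Fintype (X v)]
    (E : Set (V × V)) (hG : BH.IsChainGraph E)
    (p : (∀ v, X v) → ℝ) (hp : BH.IsPMF p) :
    BH.PairwiseMarkov (BH.gNbr E) (BH.gPar E) p ↔
      BH.PairwiseMarkov (BH.hNbr (BH.canonicalLWF E)) (BH.hPar (BH.canonicalLWF E)) p :=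
  statement8_general E p
end
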